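/- arXiv:1610.08458 — 5 statements merged into one kernel-verified Lean document; each statement's English description precedes it below -/
import Mathlib

section
/- Let n ≥ 2 and let σ_1, …, σ_{n−1} be elements of a group G satisfying the braid relations. Define the 'staircase' element c = (σ_{n−1}σ_{n−2}⋯σ_2)·(σ_{n−1}σ_{n−2}⋯σ_3)⋯(σ_{n−1}σ_{n−2})·(σ_{n−1}), i.e. c is the product over k = 2, 3, …, n−1 (in this order) of the descending blocks σ_{n−1}σ_{n−2}⋯σ_k. Then c·(σ_1σ_2⋯σ_{n−1})·c^{−1} = σ_{n−1}σ_{n−2}⋯σ_1. -/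
/-- The ascending product `σ_a σ_{a+1} ⋯ σ_b` (written left to right). -/
def ascProd {G : Type*} [Group G] (σ : ℕ → G) (a b : ℕ) : G :=
  ((List.range' a (b + 1 - a)).map σ).prod

/-- The descending product `σ_a σ_{a-1} ⋯ σ_b` (written left to right). -/
def descProd {G : Type*} [Group G] (σ : ℕ → G) (a b : ℕ) : G :=
  (((List.range' b (a + 1 - b)).map σ).reverse).prod

/-!
Write `D_k = σ_b ⋯ σ_k` and let `S_a = D_{a+1} ⋯ D_b` be the staircase below.
Descending induction on `a` gives `S_a (σ_a ⋯ σ_b) = D_a S_a`: peeling `σ_a` off the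
ascending product, it commutes past `S_{a+1}`, whose letters all have index `≥ a + 2`, and then
`D_{a+1} σ_a = D_a`. The theorem is the case `a = 1`, `b = n - 1`, where `S_1 = c`.
-/

def staircase {G : Type*} [Group G] (σ : ℕ → G) (a b : ℕ) : G :=
  ((List.range' (a + 1) (b - a)).map (descProd σ b)).prod

section

variable {G : Type*} [Group G] (σ : ℕ → G)

lemma ascProd_eq_mul_ascProd_succ {a b : ℕ} (h : a ≤ b) :
    ascProd σ a b = σ a * ascProd σ (a + 1) b := by
  rw [ascProd, ascProd, show b + 1 - a = b + 1 - (a + 1) + 1 by omega, List.range'_succ]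
  simp

lemma descProd_eq_descProd_succ_mul {a b : ℕ} (h : a ≤ b) :
    descProd σ b a = descProd σ b (a + 1) * σ a := by
  rw [descProd, descProd, show b + 1 - a = b + 1 - (a + 1) + 1 by omega, List.range'_succ]
  simp

lemma descProd_eq_ascProd_of_le {a b : ℕ} (h : b ≤ a) : descProd σ b a = ascProd σ a b := by
  obtain h | h : b + 1 - a = 0 ∨ b + 1 - a = 1 := by omega
  all_goals simp [descProd, ascProd, h]

lemma commute_descProd_right {x : G} {k b : ℕ} (h : ∀ j, k ≤ j → j ≤ b → Commute x (σ j)) :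
    Commute x (descProd σ b k) := by
  refine Commute.list_prod_right _ _ fun y hy => ?_
  obtain ⟨j, hj, rfl⟩ := List.mem_map.1 (List.mem_reverse.1 hy)
  rw [List.mem_range'_1] at hj
  exact h j hj.1 (by omega)

lemma staircase_eq_descProd_mul {a b : ℕ} (h : a < b) :
    staircase σ a b = descProd σ b (a + 1) * staircase σ (a + 1) b := by
  rw [staircase, staircase, show b - a = b - (a + 1) + 1 by omega, List.range'_succ]
  simp

lemma commute_staircase_right {x : G} {a b : ℕ}
    (h : ∀ j, a + 1 ≤ j → j ≤ b → Commute x (σ j)) : Commute x (staircase σ a b) := by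
  refine Commute.list_prod_right _ _ fun y hy => ?_
  obtain ⟨k, hk, rfl⟩ := List.mem_map.1 hy
  rw [List.mem_range'_1] at hk
  exact commute_descProd_right σ fun j hkj hjb => h j (by omega) hjb

theorem staircase_mul_ascProd (a b : ℕ)
    (hcomm : ∀ i j, a ≤ i → i + 2 ≤ j → j ≤ b → Commute (σ i) (σ j)) :
    staircase σ a b * ascProd σ a b = descProd σ b a * staircase σ a b := by
  induction h : b - a generalizing a with
  | zero =>
    rw [descProd_eq_ascProd_of_le σ (by omega), staircase, h]
    simp
  | succ d ih =>
    have hab : a < b := by omega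
    have ih := ih (a + 1) (fun i j hi => hcomm i j (by omega)) (by omega)
    have hσ : Commute (σ a) (staircase σ (a + 1) b) :=
      commute_staircase_right σ fun j hj hjb => hcomm a j le_rfl (by omega) hjb
    set S := staircase σ (a + 1) b
    set D := descProd σ b (a + 1)
    calc staircase σ a b * ascProd σ a b
        = D * S * (σ a * ascProd σ (a + 1) b) := by
          rw [staircase_eq_descProd_mul σ hab, ascProd_eq_mul_ascProd_succ σ hab.le]
      _ = D * σ a * (S * ascProd σ (a + 1) b) := by
          rw [mul_assoc D, ← mul_assoc S, ← hσ.eq]; group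
      _ = descProd σ b a * staircase σ a b := by
          rw [ih, staircase_eq_descProd_mul σ hab, descProd_eq_descProd_succ_mul σ hab.le,
            mul_assoc]

end

theorem staircase_conjugates_ascending_to_descending_general
    {G : Type*} [Group G] (n : ℕ) (σ : ℕ → G)
    (hcomm : ∀ i j, 1 ≤ i → 1 ≤ j → i + 1 ≤ n → j + 1 ≤ n → i + 2 ≤ j →
      σ i * σ j = σ j * σ i)
    (c : G)
    (hc : c = ((List.range' 2 (n - 2)).map (fun k => descProd σ (n - 1) k)).prod) :
    c * ascProd σ 1 (n - 1) * c⁻¹ = descProd σ (n - 1) 1 := by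
  have hc : c = staircase σ 1 (n - 1) := by
    rw [hc, staircase, show n - 1 - 1 = n - 2 by omega]
  rw [mul_inv_eq_iff_eq_mul, hc]
  exact staircase_mul_ascProd σ 1 (n - 1) fun i j hi hij hj =>
    hcomm i j hi (by omega) (by omega) (by omega) hij

/-- If `σ_1, …, σ_{n-1}` satisfy the braid relations and
`c = (σ_{n-1}⋯σ_2)(σ_{n-1}⋯σ_3)⋯(σ_{n-1}σ_{n-2})(σ_{n-1})`, then
`c (σ_1 σ_2 ⋯ σ_{n-1}) c⁻¹ = σ_{n-1} σ_{n-2} ⋯ σ_1`. -/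
theorem staircase_conjugates_ascending_to_descending
    {G : Type*} [Group G] (n : ℕ) (hn : 2 ≤ n) (σ : ℕ → G)
    (hbraid : ∀ i, 1 ≤ i → i + 2 ≤ n →
      σ i * σ (i + 1) * σ i = σ (i + 1) * σ i * σ (i + 1))
    (hcomm : ∀ i j, 1 ≤ i → 1 ≤ j → i + 1 ≤ n → j + 1 ≤ n → i + 2 ≤ j →
      σ i * σ j = σ j * σ i)
    (c : G)
    (hc : c = ((List.range' 2 (n - 2)).map (fun k => descProd σ (n - 1) k)).prod) :
    c * ascProd σ 1 (n - 1) * c⁻¹ = descProd σ (n - 1) 1 :=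
  staircase_conjugates_ascending_to_descending_general n σ hcomm c hc
end

section
/- Let h ≥ 1 and let σ_1, …, σ_{4h−1} be elements of a group G satisfying the braid relations. Then (σ_1σ_2⋯σ_{4h−1})^{4h} = (σ_1σ_2⋯σ_{2h−1} · σ_{4h−1}σ_{4h−2}⋯σ_{2h+1} · σ_{2h})^{4h}. (In the braid group B_{4h} this says that the full twist, i.e. the 4h-th power of σ_1σ_2⋯σ_{4h−1}, equals the 4h-th power of the rearranged word σ_1⋯σ_{2h−1}·σ_{4h−1}⋯σ_{2h+1}·σ_{2h}.) -/
/-!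
Write `δ = σ_a σ_{a+1} ⋯ σ_b`. Conjugation by `δ` shifts `σ_i` to `σ_{i+1}` for `i < b`, and
`δ²` sends `σ_b` to `σ_a`; going once around, `δ^{b+2-a}` commutes with every `σ_i`. Splitting the
word after `σ_m`, the descending tail `σ_b ⋯ σ_{m+1}` is the conjugate of the ascending one
`σ_{m+1} ⋯ σ_b` by the half twist on `σ_{m+2}, …, σ_b`, which commutes with `σ_a, …, σ_m`. Hence the
rearranged word is a conjugate of `δ` by a product of generators, and its `(b+2-a)`-th power is the
conjugate of the central element `δ^{b+2-a}`, i.e. `δ^{b+2-a}` itself.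
-/

section Braid

variable {G : Type*} [Group G] {σ : ℕ → G} {a b i j m : ℕ}

def FarCommute (σ : ℕ → G) (a b : ℕ) : Prop :=
  ∀ i j, a ≤ i → i + 2 ≤ j → j ≤ b → Commute (σ i) (σ j)

def BraidRel (σ : ℕ → G) (a b : ℕ) : Prop :=
  ∀ i, a ≤ i → i + 1 ≤ b → σ i * σ (i + 1) * σ i = σ (i + 1) * σ i * σ (i + 1)

/-- Garside's half twist on `σ_a, …, σ_b`, written as `(σ_b ⋯ σ_a) (σ_b ⋯ σ_{a+1}) ⋯ (σ_b)`. -/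
def halfTwist (σ : ℕ → G) (a b : ℕ) : G :=
  ((List.range' a (b + 1 - a)).map (descProd σ b)).prod

theorem ascProd_eq_mul_ascProd (hab : a ≤ b) : ascProd σ a b = σ a * ascProd σ (a + 1) b := by
  rw [ascProd, ascProd, show b + 1 - a = b + 1 - (a + 1) + 1 by omega, List.range'_succ]
  simp

theorem descProd_eq_descProd_mul (hab : a ≤ b) : descProd σ b a = descProd σ b (a + 1) * σ a := by
  rw [descProd, descProd, show b + 1 - a = b + 1 - (a + 1) + 1 by omega, List.range'_succ]
  simp

theorem halfTwist_eq_mul_halfTwist (hab : a ≤ b) :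
    halfTwist σ a b = descProd σ b a * halfTwist σ (a + 1) b := by
  rw [halfTwist, halfTwist, show b + 1 - a = b + 1 - (a + 1) + 1 by omega, List.range'_succ]
  simp

theorem ascProd_mul_ascProd (ham : a ≤ m + 1) (hmb : m ≤ b) :
    ascProd σ a m * ascProd σ (m + 1) b = ascProd σ a b := by
  have h := List.range'_append_1 (s := a) (m := m + 1 - a) (n := b - m)
  rw [show a + (m + 1 - a) = m + 1 by omega, show m + 1 - a + (b - m) = b + 1 - a by omega] at h
  rw [ascProd, ascProd, ascProd, ← List.prod_append, ← List.map_append,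
    show b + 1 - (m + 1) = b - m by omega, h]

theorem commute_ascProd {x : G} (hx : ∀ j, a ≤ j → j ≤ b → Commute x (σ j)) :
    Commute x (ascProd σ a b) :=
  Commute.list_prod_right _ _ fun y hy => by
    obtain ⟨j, hj, rfl⟩ := List.mem_map.1 hy
    rw [List.mem_range'_1] at hj
    exact hx j hj.1 (by omega)

theorem commute_descProd {x : G} (hx : ∀ j, a ≤ j → j ≤ b → Commute x (σ j)) :
    Commute x (descProd σ b a) :=
  Commute.list_prod_right _ _ fun y hy => by
    obtain ⟨j, hj, rfl⟩ := List.mem_map.1 (List.mem_reverse.1 hy)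
    rw [List.mem_range'_1] at hj
    exact hx j hj.1 (by omega)

theorem commute_halfTwist {x : G} (hx : ∀ j, a ≤ j → j ≤ b → Commute x (σ j)) :
    Commute x (halfTwist σ a b) :=
  Commute.list_prod_right _ _ fun y hy => by
    obtain ⟨c, hc, rfl⟩ := List.mem_map.1 hy
    rw [List.mem_range'_1] at hc
    exact commute_descProd fun j hj₁ hj₂ => hx j (by omega) hj₂

theorem FarCommute.mono (h : FarCommute σ a b) {a' b' : ℕ} (ha : a ≤ a') (hb : b' ≤ b) :
    FarCommute σ a' b' :=
  fun i j hi hij hj => h i j (ha.trans hi) hij (hj.trans hb)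

theorem BraidRel.mono (h : BraidRel σ a b) {a' b' : ℕ} (ha : a ≤ a') (hb : b' ≤ b) :
    BraidRel σ a' b' :=
  fun i hi hib => h i (ha.trans hi) (hib.trans hb)

theorem semiconjBy_ascProd_succ (hbr : BraidRel σ a b) (hfc : FarCommute σ a b) (hai : a ≤ i)
    (hib : i + 1 ≤ b) : SemiconjBy (ascProd σ a b) (σ i) (σ (i + 1)) := by
  have head : SemiconjBy (ascProd σ a (i + 1)) (σ i) (σ (i + 1)) := by
    induction hai using Nat.decreasingInduction with
    | self =>
      rw [SemiconjBy, ascProd, show i + 1 + 1 - i = 2 by omega]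
      simpa [List.range', mul_assoc] using hbr i le_rfl hib
    | of_succ k hki ih =>
      rw [ascProd_eq_mul_ascProd (by omega)]
      exact SemiconjBy.mul_left (hfc k (i + 1) le_rfl (by omega) hib)
        (ih (hbr.mono (by omega) le_rfl) (hfc.mono (by omega) le_rfl))
  rw [← ascProd_mul_ascProd (m := i + 1) (by omega) hib]
  exact head.mul_left (commute_ascProd fun j hj hjb => hfc i j hai hj hjb).symm

theorem semiconjBy_ascProd_pow (hbr : BraidRel σ a b) (hfc : FarCommute σ a b) (hai : a ≤ i)
    (hij : i ≤ j) (hjb : j ≤ b) : SemiconjBy (ascProd σ a b ^ (j - i)) (σ i) (σ j) := by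
  induction j, hij using Nat.le_induction with
  | base => simp
  | succ j hij ih =>
    rw [show j + 1 - i = j - i + 1 by omega, pow_succ']
    exact (semiconjBy_ascProd_succ hbr hfc (by omega) hjb).mul_left (ih (by omega))

theorem semiconjBy_ascProd_succ_mul_ascProd (hbr : BraidRel σ a b) (hfc : FarCommute σ a b)
    (hab : a ≤ b) : SemiconjBy (ascProd σ (a + 1) b * ascProd σ a b) (σ b) (σ a) := by
  induction hab using Nat.decreasingInduction with
  | self =>
    rw [show ascProd σ (b + 1) b * ascProd σ b b = σ b by simp [ascProd]]
    exact Commute.refl _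
  | of_succ k hkb ih =>
    have hc : Commute (σ k) (ascProd σ (k + 1 + 1) b) :=
      commute_ascProd fun j hj hjb => hfc k j le_rfl hj hjb
    have hsplit : ascProd σ (k + 1) b * ascProd σ k b
        = σ (k + 1) * σ k * (ascProd σ (k + 1 + 1) b * ascProd σ (k + 1) b) := by
      rw [ascProd_eq_mul_ascProd (a := k) hkb.le]
      nth_rewrite 1 [ascProd_eq_mul_ascProd (a := k + 1) hkb]
      rw [mul_assoc, ← mul_assoc (ascProd σ (k + 1 + 1) b) (σ k), ← hc.eq]
      simp only [mul_assoc]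
    have hbraid : SemiconjBy (σ (k + 1) * σ k) (σ (k + 1)) (σ k) := by
      rw [SemiconjBy, ← mul_assoc]
      exact (hbr k le_rfl hkb).symm
    rw [hsplit]
    exact hbraid.mul_left (ih (hbr.mono (by omega) le_rfl) (hfc.mono (by omega) le_rfl))

theorem semiconjBy_ascProd_sq (hbr : BraidRel σ a b) (hfc : FarCommute σ a b) (hab : a ≤ b) :
    SemiconjBy (ascProd σ a b ^ 2) (σ b) (σ a) := by
  have h := SemiconjBy.mul_left (Commute.refl (σ a))
    (semiconjBy_ascProd_succ_mul_ascProd hbr hfc hab)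
  rwa [← mul_assoc, ← ascProd_eq_mul_ascProd hab, ← sq] at h

/-- The exponent splits as `(b - i) + 2 + (i - a)`: conjugation by these powers of `δ` moves
`σ_i` to `σ_b`, then to `σ_a`, then back to `σ_i`. -/
theorem commute_ascProd_pow (hbr : BraidRel σ a b) (hfc : FarCommute σ a b) (hai : a ≤ i)
    (hib : i ≤ b) : Commute (ascProd σ a b ^ (b + 2 - a)) (σ i) := by
  have h := (semiconjBy_ascProd_pow hbr hfc le_rfl hai hib).mul_left
    ((semiconjBy_ascProd_sq hbr hfc (hai.trans hib)).mul_left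
      (semiconjBy_ascProd_pow hbr hfc hai hib le_rfl))
  rwa [← pow_add, ← pow_add, show i - a + (2 + (b - i)) = b + 2 - a by omega] at h

theorem semiconjBy_halfTwist (hfc : FarCommute σ a b) (hab : a ≤ b) :
    SemiconjBy (halfTwist σ (a + 1) b) (ascProd σ a b) (descProd σ b a) := by
  induction hab using Nat.decreasingInduction with
  | self => simp [halfTwist, ascProd, descProd]
  | of_succ k hkb ih =>
    have hc : Commute (σ k) (halfTwist σ (k + 1 + 1) b) :=
      commute_halfTwist fun j hj hjb => hfc k j le_rfl hj hjb
    rw [SemiconjBy, halfTwist_eq_mul_halfTwist hkb, ascProd_eq_mul_ascProd hkb.le,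
      descProd_eq_descProd_mul hkb.le]
    calc descProd σ b (k + 1) * halfTwist σ (k + 1 + 1) b * (σ k * ascProd σ (k + 1) b)
        = descProd σ b (k + 1) * (σ k * (halfTwist σ (k + 1 + 1) b * ascProd σ (k + 1) b)) := by
          rw [← mul_assoc (σ k), hc.eq]; simp only [mul_assoc]
      _ = descProd σ b (k + 1) * σ k * (descProd σ b (k + 1) * halfTwist σ (k + 1 + 1) b) := by
          rw [(ih (hfc.mono (by omega) le_rfl)).eq, mul_assoc]

theorem semiconjBy_halfTwist_ascProd_mul_descProd (hfc : FarCommute σ a b) (ham : a ≤ m + 1)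
    (hmb : m + 1 ≤ b) :
    SemiconjBy (halfTwist σ (m + 2) b) (ascProd σ a b) (ascProd σ a m * descProd σ b (m + 1)) := by
  have hc : Commute (halfTwist σ (m + 2) b) (ascProd σ a m) :=
    commute_ascProd fun j hj hjm =>
      (commute_halfTwist fun l hl hlb => hfc j l hj (by omega) hlb).symm
  rw [← ascProd_mul_ascProd ham (by omega)]
  exact SemiconjBy.mul_right hc (semiconjBy_halfTwist (hfc.mono (by omega) le_rfl) hmb)

theorem ascProd_mul_descProd_pow (hbr : BraidRel σ a b) (hfc : FarCommute σ a b)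
    (ham : a ≤ m + 1) (hmb : m + 1 ≤ b) :
    (ascProd σ a m * descProd σ b (m + 1)) ^ (b + 2 - a) = ascProd σ a b ^ (b + 2 - a) := by
  have hconj := (semiconjBy_halfTwist_ascProd_mul_descProd hfc ham hmb).pow_right (b + 2 - a)
  have hcent : Commute (halfTwist σ (m + 2) b) (ascProd σ a b ^ (b + 2 - a)) :=
    (commute_halfTwist fun j hj hjb => commute_ascProd_pow hbr hfc (by omega) hjb).symm
  exact mul_right_cancel (hconj.eq.symm.trans hcent.eq)

end Braid

theorem fullTwist_eq_rearranged_power_general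
    {G : Type*} [Group G] (h : ℕ) (σ : ℕ → G)
    (hbraid : ∀ i, 1 ≤ i → i + 2 ≤ 4 * h →
      σ i * σ (i + 1) * σ i = σ (i + 1) * σ i * σ (i + 1))
    (hcomm : ∀ i j, 1 ≤ i → 1 ≤ j → i + 1 ≤ 4 * h → j + 1 ≤ 4 * h → i + 2 ≤ j →
      σ i * σ j = σ j * σ i) :
    (ascProd σ 1 (4 * h - 1)) ^ (4 * h) =
      (ascProd σ 1 (2 * h - 1) * descProd σ (4 * h - 1) (2 * h + 1) * σ (2 * h)) ^ (4 * h) := by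
  obtain rfl | hh := Nat.eq_zero_or_pos h
  · simp
  have hw := ascProd_mul_descProd_pow (a := 1) (m := 2 * h - 1) (b := 4 * h - 1)
    (fun i hi hib => hbraid i hi (by omega))
    (fun i j hi hij hjb => hcomm i j hi (by omega) (by omega) (by omega) hij) (by omega) (by omega)
  rw [show 4 * h - 1 + 2 - 1 = 4 * h by omega, show 2 * h - 1 + 1 = 2 * h by omega,
    descProd_eq_descProd_mul (by omega), ← mul_assoc] at hw
  exact hw.symm

/-- If `σ_1, …, σ_{4h-1}` satisfy the braid relations then
`(σ_1 σ_2 ⋯ σ_{4h-1})^{4h} = (σ_1 ⋯ σ_{2h-1} · σ_{4h-1} ⋯ σ_{2h+1} · σ_{2h})^{4h}`. -/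
theorem fullTwist_eq_rearranged_power
    {G : Type*} [Group G] (h : ℕ) (hh : 1 ≤ h) (σ : ℕ → G)
    (hbraid : ∀ i, 1 ≤ i → i + 2 ≤ 4 * h →
      σ i * σ (i + 1) * σ i = σ (i + 1) * σ i * σ (i + 1))
    (hcomm : ∀ i j, 1 ≤ i → 1 ≤ j → i + 1 ≤ 4 * h → j + 1 ≤ 4 * h → i + 2 ≤ j →
      σ i * σ j = σ j * σ i) :
    (ascProd σ 1 (4 * h - 1)) ^ (4 * h) =
      (ascProd σ 1 (2 * h - 1) * descProd σ (4 * h - 1) (2 * h + 1) * σ (2 * h)) ^ (4 * h) :=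
  fullTwist_eq_rearranged_power_general h σ hbraid hcomm
end

section
/- Let h ≥ 1 and let σ_1, …, σ_{4h−1} be elements of a group G satisfying the braid relations. Then (σ_1σ_2⋯σ_{2h−1} · σ_{4h−1}σ_{4h−2}⋯σ_{2h+1} · σ_{2h})^{2h} = (σ_1)·(σ_2σ_1)·(σ_3σ_2σ_1)⋯(σ_{4h−1}σ_{4h−2}⋯σ_1), i.e. the 2h-th power of the word σ_1⋯σ_{2h−1}·σ_{4h−1}⋯σ_{2h+1}·σ_{2h} equals the product over k = 1, 2, …, 4h−1 (in this order) of the descending blocks σ_kσ_{k−1}⋯σ_1. (In B_{4h} the right-hand side is the half-twist about the 4h strands.) -/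
namespace BraidAux
variable {G : Type*} [Group G]

def asc (σ : ℕ → G) (a : ℕ) : ℕ → G
  | 0 => 1
  | ℓ+1 => asc σ a ℓ * σ (a + ℓ)

def dsc (σ : ℕ → G) (a : ℕ) : ℕ → G
  | 0 => 1
  | ℓ+1 => σ (a + ℓ) * dsc σ a ℓ

lemma asc_front (σ : ℕ → G) (a ℓ : ℕ) : asc σ a (ℓ+1) = σ a * asc σ (a+1) ℓ := by
  induction ℓ with
  | zero => simp [asc]
  | succ ℓ ih =>
      rw [asc, ih, asc, mul_assoc]
      have : a + 1 + ℓ = a + (ℓ + 1) := by omega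
      rw [this]

lemma dsc_back (σ : ℕ → G) (a ℓ : ℕ) : dsc σ a (ℓ+1) = dsc σ (a+1) ℓ * σ a := by
  induction ℓ with
  | zero => simp [dsc]
  | succ ℓ ih =>
      rw [dsc, ih, dsc, ← mul_assoc]
      have : a + 1 + ℓ = a + (ℓ + 1) := by omega
      rw [this]

lemma dsc_concat (σ : ℕ → G) (a m : ℕ) : ∀ ℓ, dsc σ (a+m) ℓ * dsc σ a m = dsc σ a (ℓ+m) := by
  intro ℓ; induction ℓ with
  | zero => simp [dsc]
  | succ ℓ ih =>
      rw [dsc, mul_assoc, ih]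
      have h1 : a + m + ℓ = a + (ℓ + m) := by omega
      have h2 : ℓ + 1 + m = (ℓ + m) + 1 := by omega
      rw [h1, h2, dsc]

def Hb (σ : ℕ → G) (N : ℕ) : Prop :=
  ∀ i, 1 ≤ i → i + 2 ≤ N → σ i * σ (i+1) * σ i = σ (i+1) * σ i * σ (i+1)

def Hc (σ : ℕ → G) (N : ℕ) : Prop :=
  ∀ i j, 1 ≤ i → 1 ≤ j → i+1 ≤ N → j+1 ≤ N → i+2 ≤ j → σ i * σ j = σ j * σ i

variable {σ : ℕ → G} {N : ℕ}

lemma hc' (hc : Hc σ N) {i j : ℕ} (h1 : 1 ≤ i) (h2 : 1 ≤ j) (h3 : i+1 ≤ N)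
    (h4 : j+1 ≤ N) (h5 : i+2 ≤ j ∨ j+2 ≤ i) : σ i * σ j = σ j * σ i := by
  rcases h5 with h5 | h5
  · exact hc i j h1 h2 h3 h4 h5
  · exact (hc j i h2 h1 h4 h3 h5).symm

/-- commutation of a letter with a descending block (letters a..a+ℓ-1) -/
lemma comm_dsc (hc : Hc σ N) (j a : ℕ) (hj1 : 1 ≤ j) (hj2 : j + 1 ≤ N) (ha : 1 ≤ a) :
    ∀ ℓ, a + ℓ ≤ N → (a + ℓ + 1 ≤ j ∨ j + 2 ≤ a) →
    σ j * dsc σ a ℓ = dsc σ a ℓ * σ j := by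
  intro ℓ; induction ℓ with
  | zero => simp [dsc]
  | succ ℓ ih =>
      intro hN hgap
      rw [dsc, ← mul_assoc, hc' hc hj1 (by omega) hj2 (by omega) (by omega),
        mul_assoc, ih (by omega) (by omega), ← mul_assoc]

lemma comm_asc (hc : Hc σ N) (j a : ℕ) (hj1 : 1 ≤ j) (hj2 : j + 1 ≤ N) (ha : 1 ≤ a) :
    ∀ ℓ, a + ℓ ≤ N → (a + ℓ + 1 ≤ j ∨ j + 2 ≤ a) →
    σ j * asc σ a ℓ = asc σ a ℓ * σ j := by
  intro ℓ; induction ℓ with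
  | zero => simp [asc]
  | succ ℓ ih =>
      intro hN hgap
      rw [asc, ← mul_assoc, ih (by omega) (by omega), mul_assoc,
        hc' hc hj1 (by omega) hj2 (by omega) (by omega), ← mul_assoc]

/-- T2 : σ_i · D = D · σ_{i+1} for i in [a, a+ℓ-2] -/
lemma push_dsc (hb : Hb σ N) (hc : Hc σ N) {a : ℕ} (ha : 1 ≤ a) :
    ∀ ℓ, ∀ i, a ≤ i → i + 2 ≤ a + ℓ → a + ℓ ≤ N →
    σ i * dsc σ a ℓ = dsc σ a ℓ * σ (i+1) := by
  intro ℓ; induction ℓ with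
  | zero => intro i h1 h2; omega
  | succ ℓ ih =>
      intro i h1 h2 hN
      rcases Nat.lt_or_ge (i+2) (a + ℓ + 1) with hlt | hge
      · -- i + 2 ≤ a + ℓ : commute with top letter then IH
        rw [dsc, ← mul_assoc, hc' hc (by omega) (by omega) (by omega) (by omega) (by omega),
          mul_assoc, ih i h1 (by omega) (by omega), ← mul_assoc]
      · -- i = a + ℓ - 1, hence ℓ ≥ 1
        have hi : i = a + ℓ - 1 := by omega
        obtain ⟨m, rfl⟩ : ∃ m, ℓ = m + 1 := ⟨ℓ - 1, by omega⟩
        have him : i = a + m := by omega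
        subst him
        rw [dsc, dsc, ← mul_assoc, ← mul_assoc]
        have harr : a + (m+1) = a + m + 1 := by omega
        rw [harr, hb (a+m) (by omega) (by omega)]
        rw [mul_assoc, mul_assoc, comm_dsc hc (a+m+1) a (by omega) (by omega) ha m (by omega) (by omega)]
        simp only [mul_assoc]

/-- T3 : A · σ_i = σ_{i+1} · A for i in [a, a+ℓ-2] -/
lemma push_asc (hb : Hb σ N) (hc : Hc σ N) :
    ∀ ℓ a i, 1 ≤ a → a ≤ i → i + 2 ≤ a + ℓ → a + ℓ ≤ N →
    asc σ a ℓ * σ i = σ (i+1) * asc σ a ℓ := by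
  intro ℓ; induction ℓ with
  | zero => intro a i h0 h1 h2; omega
  | succ ℓ ih =>
      intro a i ha h1 h2 hN
      rcases Nat.lt_or_ge a i with hlt | hge
      · -- a + 1 ≤ i
        rw [asc_front, mul_assoc, ih (a+1) i (by omega) (by omega) (by omega) (by omega),
          ← mul_assoc, hc' hc (by omega) (by omega) (by omega) (by omega) (by omega), mul_assoc]
      · -- i = a, ℓ ≥ 2
        have hia : i = a := by omega
        subst hia
        obtain ⟨m, rfl⟩ : ∃ m, ℓ = m + 1 := ⟨ℓ - 1, by omega⟩
        rw [asc_front, asc_front, mul_assoc, mul_assoc,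
          ← comm_asc hc i (i+1+1) (by omega) (by omega) (by omega) m (by omega) (by omega)]
        simp only [← mul_assoc]
        rw [hb i (by omega) (by omega)]

/-- (iv): A(c,c+p)·D(c+q-1,c) = D(c+q,c)·A(c+1,c+p) -/
lemma lem_iv (hb : Hb σ N) (hc : Hc σ N) :
    ∀ q p c, q ≤ p → 1 ≤ c → c + p + 1 ≤ N →
    asc σ c (p+1) * dsc σ c q = dsc σ c (q+1) * asc σ (c+1) p := by
  intro q; induction q with
  | zero => intro p c _ hc1 hN; rw [asc_front]; simp [dsc, mul_assoc]
  | succ q ih =>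
      intro p c hqp hc1 hN
      rw [show dsc σ c (q+1) = σ (c+q) * dsc σ c q from rfl, ← mul_assoc,
        push_asc hb hc (p+1) c (c+q) hc1 (by omega) (by omega) (by omega),
        mul_assoc, ih p c (by omega) hc1 hN, ← mul_assoc]
      have e : c + q + 1 = c + (q + 1) := by omega
      rw [e, show σ (c + (q+1)) * dsc σ c (q+1) = dsc σ c (q+2) from rfl]

/-- (v): A(a,a+ℓ-1)·D = D·A(a+1,a+ℓ) when the asc sits strictly inside D's range -/
lemma lem_v (hb : Hb σ N) (hc : Hc σ N) :
    ∀ ℓ a i L, 1 ≤ i → i ≤ a → a + ℓ + 1 ≤ i + L → i + L ≤ N →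
    asc σ a ℓ * dsc σ i L = dsc σ i L * asc σ (a+1) ℓ := by
  intro ℓ; induction ℓ with
  | zero => intro a i L _ _ _ _; simp [asc]
  | succ ℓ ih =>
      intro a i L hi ha hr hN
      rw [show asc σ a (ℓ+1) = asc σ a ℓ * σ (a+ℓ) from rfl, mul_assoc,
        push_dsc hb hc hi L (a+ℓ) (by omega) (by omega) hN, ← mul_assoc,
        ih a i L hi ha (by omega) hN, mul_assoc]
      have e : a + ℓ + 1 = a + 1 + ℓ := by omega
      rw [e, show asc σ (a+1) ℓ * σ (a+1+ℓ) = asc σ (a+1) (ℓ+1) from rfl]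

/-- (vi): short desc block through longer desc block with same base -/
lemma lem_vi (hb : Hb σ N) (hc : Hc σ N) :
    ∀ L1 L2 c, L1 + 1 ≤ L2 → 1 ≤ c → c + L2 ≤ N →
    dsc σ c L1 * dsc σ c L2 = dsc σ c L2 * dsc σ (c+1) L1 := by
  intro L1; induction L1 with
  | zero => intro L2 c _ _ _; simp [dsc]
  | succ L1 ih =>
      intro L2 c hL hc1 hN
      rw [show dsc σ c (L1+1) = σ (c+L1) * dsc σ c L1 from rfl, mul_assoc,
        ih L2 c (by omega) hc1 hN, ← mul_assoc,
        push_dsc hb hc hc1 L2 (c+L1) (by omega) (by omega) hN, mul_assoc]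
      have e : c + L1 + 1 = c + 1 + L1 := by omega
      rw [e, show σ (c+1+L1) * dsc σ (c+1) L1 = dsc σ (c+1) (L1+1) from rfl]

def tri (σ : ℕ → G) (c : ℕ) : ℕ → G
  | 0 => 1
  | q+1 => tri σ c q * dsc σ c (q+1)

/-- (vii): triangle through a longer desc block with same base -/
lemma lem_vii (hb : Hb σ N) (hc : Hc σ N) :
    ∀ q L c, q + 1 ≤ L → 1 ≤ c → c + L ≤ N →
    tri σ c q * dsc σ c L = dsc σ c L * tri σ (c+1) q := by
  intro q; induction q with
  | zero => intro L c _ _ _; simp [tri]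
  | succ q ih =>
      intro L c hL hc1 hN
      rw [show tri σ c (q+1) = tri σ c q * dsc σ c (q+1) from rfl, mul_assoc,
        lem_vi hb hc (q+1) L c (by omega) hc1 hN, ← mul_assoc,
        ih L c (by omega) hc1 hN, mul_assoc,
        show tri σ (c+1) q * dsc σ (c+1) (q+1) = tri σ (c+1) (q+1) from rfl]

lemma lem_ii (hb : Hb σ N) (hc : Hc σ N) (q c : ℕ) (hc1 : 1 ≤ c) (hN : c + q + 1 ≤ N) :
    tri σ c (q+1) = dsc σ c (q+1) * tri σ (c+1) q := by
  rw [show tri σ c (q+1) = tri σ c q * dsc σ c (q+1) from rfl,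
    lem_vii hb hc q (q+1) c (le_refl _) hc1 (by omega)]

/-- (iii): asc block absorbs into triangle -/
lemma lem_iii (hb : Hb σ N) (hc : Hc σ N) :
    ∀ q c, 1 ≤ c → c + q + 1 ≤ N → asc σ c (q+1) * tri σ c q = tri σ c (q+1) := by
  intro q; induction q with
  | zero => intro c _ _; simp [asc, tri, dsc]
  | succ q ih =>
      intro c hc1 hN
      rw [lem_ii hb hc q c hc1 (by omega), ← mul_assoc,
        lem_iv hb hc (q+1) (q+1) c (le_refl _) hc1 (by omega), mul_assoc,
        ih (c+1) (by omega) (by omega),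
        ← lem_ii hb hc (q+1) c hc1 (by omega)]

/-- staircase: PPg σ k c r = ∏_{i=c}^{c+r-1} dsc σ i k -/
def PPg (σ : ℕ → G) (k : ℕ) : ℕ → ℕ → G
  | _, 0 => 1
  | c, r+1 => dsc σ c k * PPg σ k (c+1) r

lemma PPg_back (σ : ℕ → G) (k : ℕ) : ∀ r c, PPg σ k c (r+1) = PPg σ k c r * dsc σ (c+r) k := by
  intro r; induction r with
  | zero => intro c; simp [PPg]
  | succ r ih =>
      intro c
      rw [show PPg σ k c (r+2) = dsc σ c k * PPg σ k (c+1) (r+1) from rfl, ih (c+1),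
        ← mul_assoc, show dsc σ c k * PPg σ k (c+1) r = PPg σ k c (r+1) from rfl]
      have e : c + 1 + r = c + (r+1) := by omega
      rw [e]

lemma PPg_zero_k (σ : ℕ → G) : ∀ r c, PPg σ 0 c r = 1 := by
  intro r; induction r with
  | zero => intro c; rfl
  | succ r ih => intro c; rw [show PPg σ 0 c (r+1) = dsc σ c 0 * PPg σ 0 (c+1) r from rfl, ih]; simp [dsc]

lemma comm_dsc_dsc (hc : Hc σ N) (b a ℓ : ℕ) (ha : 1 ≤ a) (hba : a + ℓ + 1 ≤ b) :
    ∀ m, b + m ≤ N → dsc σ b m * dsc σ a ℓ = dsc σ a ℓ * dsc σ b m := by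
  intro m; induction m with
  | zero => intro _; simp [dsc]
  | succ m ih =>
      intro hN
      rw [show dsc σ b (m+1) = σ (b+m) * dsc σ b m from rfl, mul_assoc, ih (by omega),
        ← mul_assoc, comm_dsc hc (b+m) a (by omega) (by omega) ha ℓ (by omega) (by omega),
        mul_assoc]

lemma comm_sig_PP (hc : Hc σ N) (j k : ℕ) (hj1 : 1 ≤ j) (hj2 : j + 1 ≤ N) :
    ∀ r c, 1 ≤ c → c + r + k ≤ j → σ j * PPg σ k c r = PPg σ k c r * σ j := by
  intro r; induction r with
  | zero => intro c _ _; simp [PPg]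
  | succ r ih =>
      intro c hc1 hcr
      rw [show PPg σ k c (r+1) = dsc σ c k * PPg σ k (c+1) r from rfl, ← mul_assoc,
        comm_dsc hc j c hj1 hj2 hc1 k (by omega) (by omega), mul_assoc,
        ih (c+1) (by omega) (by omega), ← mul_assoc]

lemma comm_dsc_PP (hc : Hc σ N) (b m k : ℕ) (hbm : b + m ≤ N) :
    ∀ r c, 1 ≤ c → c + r + k ≤ b → dsc σ b m * PPg σ k c r = PPg σ k c r * dsc σ b m := by
  intro r; induction r with
  | zero => intro c _ _; simp [PPg]
  | succ r ih =>
      intro c hc1 hcr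
      rw [show PPg σ k c (r+1) = dsc σ c k * PPg σ k (c+1) r from rfl, ← mul_assoc,
        comm_dsc_dsc hc b c k hc1 (by omega) m hbm, mul_assoc,
        ih (c+1) (by omega) (by omega), ← mul_assoc]

lemma lem_SC (hb : Hb σ N) (hc : Hc σ N) (k : ℕ) :
    ∀ r c, 1 ≤ c → c + k + r ≤ N →
    asc σ c (k+r) * PPg σ k c r = PPg σ (k+1) c r * asc σ (c+r) k := by
  intro r; induction r with
  | zero => intro c _ _; simp [PPg]
  | succ r ih =>
      intro c hc1 hN
      rw [show PPg σ k c (r+1) = dsc σ c k * PPg σ k (c+1) r from rfl, ← mul_assoc,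
        show k + (r+1) = (k+r) + 1 from by omega,
        lem_iv hb hc k (k+r) c (by omega) hc1 (by omega), mul_assoc,
        ih (c+1) (by omega) (by omega), ← mul_assoc,
        show dsc σ c (k+1) * PPg σ (k+1) (c+1) r = PPg σ (k+1) c (r+1) from rfl]
      have e : c + 1 + r = c + (r+1) := by omega
      rw [e]

/-- full columns: QQg σ N c m = ∏_{i=c}^{c+m-1} dsc σ i (N-i) -/
def QQg (σ : ℕ → G) (N : ℕ) : ℕ → ℕ → G
  | _, 0 => 1
  | c, m+1 => dsc σ c (N - c) * QQg σ N (c+1) m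

lemma lem_SD (hb : Hb σ N) (hc : Hc σ N) :
    ∀ m a ℓ c, 1 ≤ c → c ≤ a → a + ℓ + m ≤ N →
    asc σ a ℓ * QQg σ N c m = QQg σ N c m * asc σ (a+m) ℓ := by
  intro m; induction m with
  | zero => intro a ℓ c _ _ _; simp [QQg]
  | succ m ih =>
      intro a ℓ c hc1 hca hN
      rw [show QQg σ N c (m+1) = dsc σ c (N-c) * QQg σ N (c+1) m from rfl, ← mul_assoc,
        lem_v hb hc ℓ a c (N-c) hc1 hca (by omega) (by omega), mul_assoc,
        ih (a+1) ℓ (c+1) (by omega) (by omega) (by omega), ← mul_assoc]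
      have e : a + 1 + m = a + (m+1) := by omega
      rw [e]

lemma lem_FIN (hb : Hb σ N) (hc : Hc σ N) :
    ∀ j c, 1 ≤ c → c + j ≤ N → tri σ c (N - c) = QQg σ N c j * tri σ (c+j) (N - (c+j)) := by
  intro j; induction j with
  | zero => intro c _ _; simp [QQg]
  | succ j ih =>
      intro c hc1 hN
      have e : N - c = (N - (c+1)) + 1 := by omega
      rw [e, lem_ii hb hc (N - (c+1)) c hc1 (by omega), ih (c+1) (by omega) (by omega),
        ← mul_assoc, show N - (c+1) + 1 = N - c from by omega,
        show dsc σ c (N - c) * QQg σ N (c+1) j = QQg σ N c (j+1) from rfl]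
      have e2 : c + 1 + j = c + (j+1) := by omega
      rw [e2]

lemma step_eq (hb : Hb σ N) (hc : Hc σ N) (h k : ℕ) (hh : 1 ≤ h)
    (hk : k + 1 ≤ 2*h) (hN : N = 4*h) :
    asc σ 1 (2*h-1) * (dsc σ (2*h+1) (2*h-1) * σ (2*h)) *
      (PPg σ k 1 (2*h - k) * (QQg σ N (2*h - k + 1) k * tri σ (2*h+1) (k-1)))
    = PPg σ (k+1) 1 (2*h - k - 1) * (QQg σ N (2*h - k) (k+1) * tri σ (2*h+1) k) := by
  obtain ⟨r, hr⟩ : ∃ r, 2*h - k = r + 1 := ⟨2*h - k - 1, by omega⟩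
  rw [hr, show r + 1 - 1 = r from by omega]
  have pb : PPg σ k 1 (r+1) = PPg σ k 1 r * dsc σ (r+1) k := by
    rw [PPg_back σ k r 1, Nat.add_comm 1 r]
  rw [pb]
  -- tailed rewriting helpers
  have c1 : ∀ g : G, σ (2*h) * (PPg σ k 1 r * g) = PPg σ k 1 r * (σ (2*h) * g) := by
    intro g; rw [← mul_assoc, comm_sig_PP hc (2*h) k (by omega) (by omega) r 1
      (by omega) (by omega), mul_assoc]
  have c2 : ∀ g : G, σ (2*h) * (dsc σ (r+1) k * g) = dsc σ (r+1) (k+1) * g := by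
    intro g; rw [← mul_assoc]; congr 1
    rw [show 2*h = r+1+k from by omega]; rfl
  have c3 : ∀ g : G, dsc σ (2*h+1) (2*h-1) * (PPg σ k 1 r * g)
      = PPg σ k 1 r * (dsc σ (2*h+1) (2*h-1) * g) := by
    intro g; rw [← mul_assoc, comm_dsc_PP hc (2*h+1) (2*h-1) k (by omega) r 1
      (by omega) (by omega), mul_assoc]
  have c4 : ∀ g : G, dsc σ (2*h+1) (2*h-1) * (dsc σ (r+1) (k+1) * (QQg σ N (r+1+1) k * g))
      = QQg σ N (r+1) (k+1) * g := by
    intro g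
    rw [← mul_assoc, ← mul_assoc]
    congr 1
    have hcat := dsc_concat σ (r+1) (k+1) (2*h-1)
    rw [show r+1+(k+1) = 2*h+1 from by omega] at hcat
    rw [hcat,
      show QQg σ N (r+1) (k+1) = dsc σ (r+1) (N-(r+1)) * QQg σ N (r+1+1) k from rfl,
      show N - (r+1) = 2*h-1+(k+1) from by omega]
  have c5 : ∀ g : G, asc σ 1 (2*h-1) * (PPg σ k 1 r * g)
      = PPg σ (k+1) 1 r * (asc σ (r+1) k * g) := by
    intro g
    have := lem_SC hb hc k r 1 (by omega) (by omega)
    rw [show k + r = 2*h-1 from by omega, show 1 + r = r + 1 from by omega] at this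
    rw [← mul_assoc, this, mul_assoc]
  have c6 : ∀ g : G, asc σ (r+1) k * (QQg σ N (r+1) (k+1) * g)
      = QQg σ N (r+1) (k+1) * (asc σ (2*h+1) k * g) := by
    intro g
    have := lem_SD hb hc (k+1) (r+1) k (r+1) (by omega) (by omega) (by omega)
    rw [show r+1+(k+1) = 2*h+1 from by omega] at this
    rw [← mul_assoc, this, mul_assoc]
  have c7 : asc σ (2*h+1) k * tri σ (2*h+1) (k-1) = tri σ (2*h+1) k := by
    cases k with
    | zero => simp [asc, tri]
    | succ k' =>
        rw [show k'+1-1 = k' from by omega]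
        exact lem_iii hb hc k' (2*h+1) (by omega) (by omega)
  simp only [mul_assoc]
  rw [c1, c2, c3, c4, c5, c6, c7]

lemma main_pow (hb : Hb σ N) (hc : Hc σ N) (h : ℕ) (hh : 1 ≤ h) (hN : N = 4*h) :
    ∀ k, k ≤ 2*h →
    (asc σ 1 (2*h-1) * (dsc σ (2*h+1) (2*h-1) * σ (2*h))) ^ k
      = PPg σ k 1 (2*h - k) * (QQg σ N (2*h - k + 1) k * tri σ (2*h+1) (k-1)) := by
  intro k; induction k with
  | zero => rw [pow_zero, PPg_zero_k]; simp [QQg, tri]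
  | succ k ih =>
      intro hk
      rw [pow_succ', ih (by omega),
        step_eq hb hc h k hh (by omega) hN,
        show 2*h - (k+1) = 2*h - k - 1 from by omega,
        show k + 1 - 1 = k from by omega,
        show 2*h - k - 1 + 1 = 2*h - k from by omega]

lemma prod_range'_asc (σ : ℕ → G) : ∀ ℓ a, ((List.range' a ℓ).map σ).prod = asc σ a ℓ := by
  intro ℓ; induction ℓ with
  | zero => intro a; simp [asc]
  | succ ℓ ih =>
      intro a
      rw [List.range'_concat]
      simp only [List.map_append, List.prod_append, List.map_cons, List.map_nil,
        List.prod_cons, List.prod_nil, one_mul, mul_one, ih]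
      rfl

lemma prod_range'_dsc (σ : ℕ → G) : ∀ ℓ a, (((List.range' a ℓ).map σ).reverse).prod = dsc σ a ℓ := by
  intro ℓ; induction ℓ with
  | zero => intro a; simp [dsc]
  | succ ℓ ih =>
      intro a
      rw [List.range'_concat]
      simp only [List.map_append, List.reverse_append, List.map_cons, List.map_nil,
        List.reverse_cons, List.reverse_nil, List.nil_append, List.prod_cons,
        List.prod_append, List.prod_nil, one_mul, mul_one, List.singleton_append, ih]
      rfl

end BraidAux

/-- If `σ_1, …, σ_{4h-1}` satisfy the braid relations then
`(σ_1 ⋯ σ_{2h-1} · σ_{4h-1} ⋯ σ_{2h+1} · σ_{2h})^{2h}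
  = (σ_1)(σ_2 σ_1)(σ_3 σ_2 σ_1) ⋯ (σ_{4h-1} ⋯ σ_1)`,
the half-twist about the `4h` strands. -/
theorem rearranged_power_eq_halfTwist
    {G : Type*} [Group G] (h : ℕ) (hh : 1 ≤ h) (σ : ℕ → G)
    (hbraid : ∀ i, 1 ≤ i → i + 2 ≤ 4 * h →
      σ i * σ (i + 1) * σ i = σ (i + 1) * σ i * σ (i + 1))
    (hcomm : ∀ i j, 1 ≤ i → 1 ≤ j → i + 1 ≤ 4 * h → j + 1 ≤ 4 * h → i + 2 ≤ j →
      σ i * σ j = σ j * σ i) :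
    (ascProd σ 1 (2 * h - 1) * descProd σ (4 * h - 1) (2 * h + 1) * σ (2 * h)) ^ (2 * h) =
      ((List.range' 1 (4 * h - 1)).map (fun k => descProd σ k 1)).prod := by
  have hb : BraidAux.Hb σ (4*h) := hbraid
  have hcc : BraidAux.Hc σ (4*h) := hcomm
  have e1 : ascProd σ 1 (2*h-1) = BraidAux.asc σ 1 (2*h-1) := by
    unfold ascProd; rw [BraidAux.prod_range'_asc]; congr 1 <;> omega
  have e2 : descProd σ (4*h-1) (2*h+1) = BraidAux.dsc σ (2*h+1) (2*h-1) := by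
    unfold descProd; rw [BraidAux.prod_range'_dsc]; congr 1 <;> omega
  have e3 : ∀ q, ((List.range' 1 q).map (fun k => descProd σ k 1)).prod
      = BraidAux.tri σ 1 q := by
    intro q; induction q with
    | zero => simp [BraidAux.tri]
    | succ q ih =>
        rw [List.range'_concat]
        simp only [List.map_append, List.prod_append, List.map_cons, List.map_nil,
          List.prod_cons, List.prod_nil, mul_one, one_mul, ih]
        have e : descProd σ (1 + q) 1 = BraidAux.dsc σ 1 (q+1) := by
          unfold descProd; rw [BraidAux.prod_range'_dsc]; congr 1 <;> omega
        rw [e]; rfl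
  rw [e1, e2, e3, mul_assoc,
    BraidAux.main_pow hb hcc h hh rfl (2*h) (le_refl _),
    show 2*h - 2*h = 0 from by omega,
    show BraidAux.PPg σ (2*h) 1 0 = 1 from rfl, one_mul,
    show (0:ℕ)+1 = 1 from rfl]
  have e4 := BraidAux.lem_FIN hb hcc (2*h) 1 (by omega) (by omega)
  rw [show (1:ℕ) + 2*h = 2*h+1 from by omega,
    show (4*h:ℕ) - (2*h+1) = 2*h-1 from by omega] at e4
  rw [e4]
end

section
/- (Algebraic core of: the type IA MCK Lefschetz pencil of even genus has spin total space.) Let g be even, g ≥ 2. In V, define the vectors: B_{0,1} = α_1+⋯+α_g+δ_2; B_{1,1} = α_1+⋯+α_g+β_1+β_g; B_{2i,1} = α_{i+1}+⋯+α_{g−i}+β_i+β_{g+1−i} for 1 ≤ i ≤ g/2−1; B_{g,1} = β_{g/2}+β_{g/2+1}; B_{2i+1,1} = α_{i+1}+⋯+α_{g−i}+β_{i+1}+β_{g−i} for 1 ≤ i ≤ g/2−1; C_1 = δ_4; B_{k,2} = B_{k,1}+δ_3+δ_4 for 0 ≤ k ≤ g; C_2 = δ_3. Then there exists a quadratic form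 q with respect to B such that q(B_{k,j}) = 1 for all 0 ≤ k ≤ g and j ∈ {1,2}, q(C_1) = q(C_2) = 1, and q(δ_j) = 1 for all j ∈ {1,2,3,4}. -/
/-- The mod-2 first homology of the compact genus-`g` surface with 4 boundary
components: freely spanned by `α_1, …, α_g, β_1, …, β_g, δ_1, δ_2, δ_3`. -/
abbrev MCKVec (g : ℕ) := (Fin g ⊕ Fin g ⊕ Fin 3) → ZMod 2

/-- The basis vector `α_i` (for `1 ≤ i ≤ g`). -/
def alph (g i : ℕ) : MCKVec g := fun x =>
  match x with
  | Sum.inl j => if (j : ℕ) + 1 = i then 1 else 0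
  | _ => 0

/-- The basis vector `β_i` (for `1 ≤ i ≤ g`). -/
def bet (g i : ℕ) : MCKVec g := fun x =>
  match x with
  | Sum.inr (Sum.inl j) => if (j : ℕ) + 1 = i then 1 else 0
  | _ => 0

/-- The basis vector `δ_j` (for `1 ≤ j ≤ 3`). -/
def dlt' (g j : ℕ) : MCKVec g := fun x =>
  match x with
  | Sum.inr (Sum.inr k) => if (k : ℕ) + 1 = j then 1 else 0
  | _ => 0

/-- The boundary classes `δ_1, δ_2, δ_3`, with `δ_4 := δ_1 + δ_2 + δ_3`. -/
def dlt (g j : ℕ) : MCKVec g :=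
  if j = 4 then dlt' g 1 + dlt' g 2 + dlt' g 3 else dlt' g j

/-- The mod-2 intersection pairing: the symmetric bilinear form determined by
`B(α_i, β_i) = 1` for each `i` and `B = 0` on every other pair of basis vectors. -/
def Bform (g : ℕ) (x y : MCKVec g) : ZMod 2 :=
  ∑ j : Fin g,
    (x (Sum.inl j) * y (Sum.inr (Sum.inl j)) + x (Sum.inr (Sum.inl j)) * y (Sum.inl j))

/-- The homology classes `B_{k,1}` of the vanishing cycles for the type IA MCK
Lefschetz pencil of even genus `g`:
`B_{0,1} = α_1+⋯+α_g+δ_2`, `B_{1,1} = α_1+⋯+α_g+β_1+β_g`,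
`B_{2i,1} = α_{i+1}+⋯+α_{g-i}+β_i+β_{g+1-i}` for `1 ≤ i ≤ g/2-1`,
`B_{g,1} = β_{g/2}+β_{g/2+1}`, and
`B_{2i+1,1} = α_{i+1}+⋯+α_{g-i}+β_{i+1}+β_{g-i}` for `1 ≤ i ≤ g/2-1`. -/
def BIA (g k : ℕ) : MCKVec g :=
  if k = 0 then (∑ m ∈ Finset.Icc 1 g, alph g m) + dlt g 2
  else if k = 1 then (∑ m ∈ Finset.Icc 1 g, alph g m) + bet g 1 + bet g g
  else if k = g then bet g (g / 2) + bet g (g / 2 + 1)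
  else if k % 2 = 0 then
    (∑ m ∈ Finset.Icc (k / 2 + 1) (g - k / 2), alph g m)
      + bet g (k / 2) + bet g (g + 1 - k / 2)
  else
    (∑ m ∈ Finset.Icc ((k - 1) / 2 + 1) (g - (k - 1) / 2), alph g m)
      + bet g ((k - 1) / 2 + 1) + bet g (g - (k - 1) / 2)

def qIA (g : ℕ) (x : MCKVec g) : ZMod 2 :=
  (∑ j : Fin g, (x (Sum.inl j) * x (Sum.inr (Sum.inl j)) +
      (if (j : ℕ) + 1 ≤ g / 2 then (1 : ZMod 2) else 0) * x (Sum.inr (Sum.inl j)))) +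
  ∑ k : Fin 3, x (Sum.inr (Sum.inr k))

lemma qIA_add (g : ℕ) (x y : MCKVec g) :
    qIA g (x + y) = qIA g x + qIA g y + Bform g x y := by
  simp only [qIA, Bform, Pi.add_apply]
  have h1 : ∀ j : Fin g,
      (x (Sum.inl j) + y (Sum.inl j)) * (x (Sum.inr (Sum.inl j)) + y (Sum.inr (Sum.inl j))) +
      (if (j : ℕ) + 1 ≤ g / 2 then (1 : ZMod 2) else 0) *
        (x (Sum.inr (Sum.inl j)) + y (Sum.inr (Sum.inl j)))
      = (x (Sum.inl j) * x (Sum.inr (Sum.inl j)) +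
          (if (j : ℕ) + 1 ≤ g / 2 then (1 : ZMod 2) else 0) * x (Sum.inr (Sum.inl j)))
        + (y (Sum.inl j) * y (Sum.inr (Sum.inl j)) +
          (if (j : ℕ) + 1 ≤ g / 2 then (1 : ZMod 2) else 0) * y (Sum.inr (Sum.inl j)))
        + (x (Sum.inl j) * y (Sum.inr (Sum.inl j)) + x (Sum.inr (Sum.inl j)) * y (Sum.inl j)) := by
    intro j; ring
  rw [Finset.sum_congr rfl (fun j _ => h1 j), Finset.sum_add_distrib, Finset.sum_add_distrib,
    Finset.sum_add_distrib, Finset.sum_add_distrib (f := fun k : Fin 3 => x (Sum.inr (Sum.inr k)))]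
  abel

lemma sum_pick (g : ℕ) (f : ℕ → ZMod 2) (a : ℕ) (ha : 1 ≤ a) (hag : a ≤ g) :
    (∑ j : Fin g, f ((j : ℕ) + 1) * (if (j : ℕ) + 1 = a then 1 else 0)) = f a := by
  rw [Finset.sum_eq_single (⟨a - 1, by omega⟩ : Fin g)]
  · have h : a - 1 + 1 = a := by omega
    simp [h]
  · intro j _ hj
    have hne : (j : ℕ) + 1 ≠ a := by
      intro h; apply hj; apply Fin.ext; simp; omega
    rw [if_neg hne, mul_zero]
  · intro h; exact absurd (Finset.mem_univ _) h

lemma alphSum_inl (g : ℕ) (S : Finset ℕ) (j : Fin g) :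
    (∑ m ∈ S, alph g m) (Sum.inl j) = if (j : ℕ) + 1 ∈ S then 1 else 0 := by
  rw [Finset.sum_apply]
  simp only [alph]
  exact Finset.sum_ite_eq S ((j : ℕ) + 1) (fun _ => 1)

lemma alphSum_betcomp (g : ℕ) (S : Finset ℕ) (j : Fin g) :
    (∑ m ∈ S, alph g m) (Sum.inr (Sum.inl j)) = 0 := by
  rw [Finset.sum_apply]; simp [alph]

lemma alphSum_dltcomp (g : ℕ) (S : Finset ℕ) (k : Fin 3) :
    (∑ m ∈ S, alph g m) (Sum.inr (Sum.inr k)) = 0 := by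
  rw [Finset.sum_apply]; simp [alph]

lemma q_main (g lo hi a b : ℕ) (ha1 : 1 ≤ a) (hag : a ≤ g) (hb1 : 1 ≤ b) (hbg : b ≤ g) :
    qIA g ((∑ m ∈ Finset.Icc lo hi, alph g m) + bet g a + bet g b) =
      (if a ≤ g / 2 then 1 else 0) + (if b ≤ g / 2 then 1 else 0)
      + (if a ∈ Finset.Icc lo hi then 1 else 0) + (if b ∈ Finset.Icc lo hi then 1 else 0) := by
  simp only [qIA, Pi.add_apply, alphSum_inl, alphSum_betcomp, alphSum_dltcomp, bet,
    add_zero, zero_add]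
  have h1 : ∀ j : Fin g,
      (if (j : ℕ) + 1 ∈ Finset.Icc lo hi then (1 : ZMod 2) else 0) *
        ((if (j : ℕ) + 1 = a then 1 else 0) + (if (j : ℕ) + 1 = b then 1 else 0)) +
      (if (j : ℕ) + 1 ≤ g / 2 then (1 : ZMod 2) else 0) *
        ((if (j : ℕ) + 1 = a then 1 else 0) + (if (j : ℕ) + 1 = b then 1 else 0))
      = ((if (j : ℕ) + 1 ∈ Finset.Icc lo hi then (1 : ZMod 2) else 0)
          + (if (j : ℕ) + 1 ≤ g / 2 then (1 : ZMod 2) else 0)) * (if (j : ℕ) + 1 = a then 1 else 0)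
        + ((if (j : ℕ) + 1 ∈ Finset.Icc lo hi then (1 : ZMod 2) else 0)
          + (if (j : ℕ) + 1 ≤ g / 2 then (1 : ZMod 2) else 0)) * (if (j : ℕ) + 1 = b then 1 else 0) := by
    intro j; ring
  rw [Finset.sum_congr rfl (fun j _ => h1 j), Finset.sum_add_distrib,
    sum_pick g (fun n => (if n ∈ Finset.Icc lo hi then (1 : ZMod 2) else 0)
      + (if n ≤ g / 2 then 1 else 0)) a ha1 hag,
    sum_pick g (fun n => (if n ∈ Finset.Icc lo hi then (1 : ZMod 2) else 0)
      + (if n ≤ g / 2 then 1 else 0)) b hb1 hbg]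
  ring

lemma q_dlt (g j : ℕ) (h1 : 1 ≤ j) (h3 : j ≤ 3) : qIA g (dlt' g j) = 1 := by
  simp only [qIA, dlt']
  rw [Fin.sum_univ_three]
  simp only [mul_zero, zero_add, add_zero, Finset.sum_const_zero]
  interval_cases j <;> decide

lemma q_B01 (g : ℕ) : qIA g ((∑ m ∈ Finset.Icc 1 g, alph g m) + dlt g 2) = 1 := by
  have : dlt g 2 = dlt' g 2 := by simp [dlt]
  rw [this]
  simp only [qIA, Pi.add_apply, alphSum_inl, alphSum_betcomp, alphSum_dltcomp, dlt',
    add_zero, mul_zero, zero_add, Finset.sum_const_zero]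
  rw [Fin.sum_univ_three]
  decide

lemma Bform_zero_right (g : ℕ) (x y : MCKVec g)
    (h : ∀ j : Fin g, y (Sum.inl j) = 0 ∧ y (Sum.inr (Sum.inl j)) = 0) :
    Bform g x y = 0 := by
  unfold Bform
  apply Finset.sum_eq_zero
  intro j _
  rw [(h j).1, (h j).2, mul_zero, mul_zero, add_zero]

lemma d34_comps (g : ℕ) : ∀ j : Fin g,
    (dlt g 3 + dlt g 4) (Sum.inl j) = 0 ∧ (dlt g 3 + dlt g 4) (Sum.inr (Sum.inl j)) = 0 := by
  intro j; simp [dlt, dlt']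

lemma q_d34 (g : ℕ) : qIA g (dlt g 3 + dlt g 4) = 0 := by
  simp [qIA, dlt, dlt', Fin.sum_univ_three]
  decide

lemma q_dlt4 (g : ℕ) : qIA g (dlt g 4) = 1 := by
  simp [qIA, dlt, dlt', Fin.sum_univ_three]
  decide

lemma q_dltj (g j : ℕ) (h1 : 1 ≤ j) (h3 : j ≤ 3) : qIA g (dlt g j) = 1 := by
  have h : dlt g j = dlt' g j := if_neg (by omega)
  rw [h]; exact q_dlt g j h1 h3

lemma q_BIA (g : ℕ) (hg : 2 ≤ g) (hgeven : Even g) (k : ℕ) (hk : k ≤ g) :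
    qIA g (BIA g k) = 1 := by
  obtain ⟨t, ht⟩ := hgeven
  unfold BIA
  by_cases h0 : k = 0
  · rw [if_pos h0]; exact q_B01 g
  rw [if_neg h0]
  by_cases h1 : k = 1
  · rw [if_pos h1, q_main g 1 g 1 g (by omega) (by omega) (by omega) (by omega)]
    simp only [Finset.mem_Icc]
    rw [if_pos (by omega), if_neg (by omega), if_pos (by omega), if_pos (by omega)]
    decide
  rw [if_neg h1]
  by_cases hkg : k = g
  · rw [if_pos hkg]
    have he : bet g (g / 2) + bet g (g / 2 + 1) =
        (∑ m ∈ Finset.Icc 1 0, alph g m) + bet g (g / 2) + bet g (g / 2 + 1) := by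
      rw [show Finset.Icc 1 0 = (∅ : Finset ℕ) from rfl, Finset.sum_empty, zero_add]
    rw [he, q_main g 1 0 (g / 2) (g / 2 + 1) (by omega) (by omega) (by omega) (by omega)]
    simp only [Finset.mem_Icc]
    rw [if_pos (by omega), if_neg (by omega), if_neg (by omega), if_neg (by omega)]
    decide
  rw [if_neg hkg]
  by_cases hpar : k % 2 = 0
  · rw [if_pos hpar,
      q_main g (k / 2 + 1) (g - k / 2) (k / 2) (g + 1 - k / 2)
        (by omega) (by omega) (by omega) (by omega)]
    simp only [Finset.mem_Icc]
    rw [if_pos (by omega), if_neg (by omega), if_neg (by omega), if_neg (by omega)]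
    decide
  · rw [if_neg hpar,
      q_main g ((k - 1) / 2 + 1) (g - (k - 1) / 2) ((k - 1) / 2 + 1) (g - (k - 1) / 2)
        (by omega) (by omega) (by omega) (by omega)]
    simp only [Finset.mem_Icc]
    rw [if_pos (by omega), if_neg (by omega), if_pos (by omega), if_pos (by omega)]
    decide

/-- There is a quadratic form `q` with respect to the mod-2 intersection pairing
taking the value `1` on all vanishing cycles `B_{k,1}`, `B_{k,2} = B_{k,1}+δ_3+δ_4`,
`C_1 = δ_4`, `C_2 = δ_3` of the type IA MCK pencil of even genus, and with
`q(δ_j) = 1` for all `j ∈ {1,2,3,4}`. -/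
theorem typeIA_even_genus_spin (g : ℕ) (hg : 2 ≤ g) (hgeven : Even g) :
    ∃ q : MCKVec g → ZMod 2,
      (∀ x y : MCKVec g, q (x + y) = q x + q y + Bform g x y) ∧
      (∀ k ≤ g, q (BIA g k) = 1) ∧
      (∀ k ≤ g, q (BIA g k + dlt g 3 + dlt g 4) = 1) ∧
      q (dlt g 4) = 1 ∧ q (dlt g 3) = 1 ∧
      (∀ j, 1 ≤ j → j ≤ 4 → q (dlt g j) = 1) := by
  refine ⟨qIA g, qIA_add g, fun k hk => q_BIA g hg hgeven k hk, ?_, q_dlt4 g,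
    q_dltj g 3 (by omega) (by omega), ?_⟩
  · intro k hk
    rw [add_assoc, qIA_add, q_BIA g hg hgeven k hk, q_d34,
      Bform_zero_right g _ _ (d34_comps g)]
    decide
  · intro j hj1 hj4
    interval_cases j
    · exact q_dltj g 1 (by omega) (by omega)
    · exact q_dltj g 2 (by omega) (by omega)
    · exact q_dltj g 3 (by omega) (by omega)
    · exact q_dlt4 g
end

section
/- (Algebraic core of: the type IIA MCK Lefschetz pencil of even genus has spin total space.) Let g be even, g ≥ 2. In V, define the vectors: B_{0,1} = α_1+⋯+α_g+δ_4; B_{1,1} = α_1+⋯+α_g+β_1+β_g+δ_4; B_{2i,1} = α_{i+1}+⋯+α_{g−i}+β_i+β_{g+1−i}+δ_4 for 1 ≤ i ≤ g/2−1; B_{g,1} = β_{g/2}+β_{g/2+1}+δ_4; B_{2i+1,1} = α_{i+1}+⋯+α_{g−i}+β_{i+1}+β_{g−i}+δ_4 for 1 ≤ i ≤ g/2−1; C_1 = δ_2; B_{k,2} = B_{k,1}+δ_3+δ_4 for 0 ≤ k ≤ g; C_2 = δ_1. Then there exists a quadratic form q with respect to B such that q(B_{k,j}) = 1 for all 0 ≤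 k ≤ g and j ∈ {1,2}, q(C_1) = q(C_2) = 1, and q(δ_j) = 1 for all j ∈ {1,2,3,4}. -/
/-- The homology classes `B_{k,1}` of the vanishing cycles for the type IIA MCK
Lefschetz pencil of even genus `g`:
`B_{0,1} = α_1+⋯+α_g+δ_4`, `B_{1,1} = α_1+⋯+α_g+β_1+β_g+δ_4`,
`B_{2i,1} = α_{i+1}+⋯+α_{g-i}+β_i+β_{g+1-i}+δ_4` for `1 ≤ i ≤ g/2-1`,
`B_{g,1} = β_{g/2}+β_{g/2+1}+δ_4`, and
`B_{2i+1,1} = α_{i+1}+⋯+α_{g-i}+β_{i+1}+β_{g-i}+δ_4` for `1 ≤ i ≤ g/2-1`. -/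
def BIIA (g k : ℕ) : MCKVec g :=
  if k = 0 then (∑ m ∈ Finset.Icc 1 g, alph g m) + dlt g 4
  else if k = 1 then (∑ m ∈ Finset.Icc 1 g, alph g m) + bet g 1 + bet g g + dlt g 4
  else if k = g then bet g (g / 2) + bet g (g / 2 + 1) + dlt g 4
  else if k % 2 = 0 then
    (∑ m ∈ Finset.Icc (k / 2 + 1) (g - k / 2), alph g m)
      + bet g (k / 2) + bet g (g + 1 - k / 2) + dlt g 4
  else
    (∑ m ∈ Finset.Icc ((k - 1) / 2 + 1) (g - (k - 1) / 2), alph g m)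
      + bet g ((k - 1) / 2 + 1) + bet g (g - (k - 1) / 2) + dlt g 4

/-! ### Auxiliary lemmas -/

@[simp] lemma alph_inl (g i : ℕ) (j : Fin g) :
    alph g i (Sum.inl j) = if (j : ℕ) + 1 = i then 1 else 0 := rfl
@[simp] lemma alph_inrl (g i : ℕ) (j : Fin g) : alph g i (Sum.inr (Sum.inl j)) = 0 := rfl
@[simp] lemma alph_inrr (g i : ℕ) (j : Fin 3) : alph g i (Sum.inr (Sum.inr j)) = 0 := rfl
@[simp] lemma bet_inl (g i : ℕ) (j : Fin g) : bet g i (Sum.inl j) = 0 := rfl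
@[simp] lemma bet_inrl (g i : ℕ) (j : Fin g) :
    bet g i (Sum.inr (Sum.inl j)) = if (j : ℕ) + 1 = i then 1 else 0 := rfl
@[simp] lemma bet_inrr (g i : ℕ) (j : Fin 3) : bet g i (Sum.inr (Sum.inr j)) = 0 := rfl
@[simp] lemma dlt'_inl (g i : ℕ) (j : Fin g) : dlt' g i (Sum.inl j) = 0 := rfl
@[simp] lemma dlt'_inrl (g i : ℕ) (j : Fin g) : dlt' g i (Sum.inr (Sum.inl j)) = 0 := rfl
@[simp] lemma dlt'_inrr (g i : ℕ) (j : Fin 3) :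
    dlt' g i (Sum.inr (Sum.inr j)) = if (j : ℕ) + 1 = i then 1 else 0 := rfl

@[simp] lemma dlt4_inl (g : ℕ) (j : Fin g) : dlt g 4 (Sum.inl j) = 0 := by
  simp [dlt]
@[simp] lemma dlt4_inrl (g : ℕ) (j : Fin g) : dlt g 4 (Sum.inr (Sum.inl j)) = 0 := by
  simp [dlt]
@[simp] lemma dlt4_inrr (g : ℕ) (j : Fin 3) : dlt g 4 (Sum.inr (Sum.inr j)) = 1 := by
  fin_cases j <;> simp [dlt] <;> decide

lemma sum_alph_inl (g a b : ℕ) (j : Fin g) :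
    (∑ m ∈ Finset.Icc a b, alph g m) (Sum.inl j)
      = if (j : ℕ) + 1 ∈ Finset.Icc a b then 1 else 0 := by
  rw [Finset.sum_apply]
  simp only [alph_inl]
  rw [Finset.sum_ite_eq (Finset.Icc a b) ((j:ℕ)+1) (fun _ => (1 : ZMod 2))]

@[simp] lemma sum_alph_inrl (g a b : ℕ) (j : Fin g) :
    (∑ m ∈ Finset.Icc a b, alph g m) (Sum.inr (Sum.inl j)) = 0 := by
  rw [Finset.sum_apply]; simp

@[simp] lemma sum_alph_inrr (g a b : ℕ) (j : Fin 3) :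
    (∑ m ∈ Finset.Icc a b, alph g m) (Sum.inr (Sum.inr j)) = 0 := by
  rw [Finset.sum_apply]; simp

lemma sum_indicator (g c : ℕ) (h1 : 1 ≤ c) (h2 : c ≤ g) :
    ∑ j : Fin g, (if (j : ℕ) + 1 = c then (1 : ZMod 2) else 0) = 1 := by
  rw [Finset.sum_eq_single (⟨c - 1, by omega⟩ : Fin g)]
  · simp only [Fin.val_mk]; rw [if_pos (by omega)]
  · intro b _ hb
    rw [if_neg]
    intro h
    exact hb (by ext; simp; omega)
  · simp

/-- The quadratic form. -/
def qform (g : ℕ) (x : MCKVec g) : ZMod 2 :=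
  (∑ j : Fin g, x (Sum.inl j) * x (Sum.inr (Sum.inl j)))
    + x (Sum.inr (Sum.inr 0)) + x (Sum.inr (Sum.inr 1)) + x (Sum.inr (Sum.inr 2))

lemma qform_add (g : ℕ) (x y : MCKVec g) :
    qform g (x + y) = qform g x + qform g y + Bform g x y := by
  unfold qform Bform
  simp only [Pi.add_apply]
  have h : ∀ j : Fin g, (x (Sum.inl j) + y (Sum.inl j)) *
      (x (Sum.inr (Sum.inl j)) + y (Sum.inr (Sum.inl j)))
      = x (Sum.inl j) * x (Sum.inr (Sum.inl j)) + y (Sum.inl j) * y (Sum.inr (Sum.inl j))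
        + (x (Sum.inl j) * y (Sum.inr (Sum.inl j)) + x (Sum.inr (Sum.inl j)) * y (Sum.inl j)) :=
    fun j => by ring
  rw [Finset.sum_congr rfl fun j _ => h j, Finset.sum_add_distrib, Finset.sum_add_distrib]
  ring

lemma qform_dlt (g j : ℕ) (h1 : 1 ≤ j) (h4 : j ≤ 4) : qform g (dlt g j) = 1 := by
  interval_cases j <;> simp [qform, dlt] <;> decide

lemma qform_BIIA (g k : ℕ) (hg : 2 ≤ g) (hgeven : Even g) (hk : k ≤ g) :
    qform g (BIIA g k) = 1 := by
  obtain ⟨t, ht⟩ := hgeven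
  rcases Nat.eq_zero_or_pos k with hk0 | hk1
  · subst hk0
    have hB : BIIA g 0 = (∑ m ∈ Finset.Icc 1 g, alph g m) + dlt g 4 := by
      unfold BIIA; rw [if_pos rfl]
    rw [hB]
    simp [qform, Pi.add_apply, sum_alph_inl]
    decide
  · rcases eq_or_ne k 1 with hk1' | hkne1
    · subst hk1'
      have hB : BIIA g 1 = (∑ m ∈ Finset.Icc 1 g, alph g m) + bet g 1 + bet g g + dlt g 4 := by
        unfold BIIA; rw [if_neg one_ne_zero, if_pos rfl]
      rw [hB]
      unfold qform
      simp only [Pi.add_apply, sum_alph_inl, sum_alph_inrl, sum_alph_inrr, bet_inl, bet_inrl,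
        bet_inrr, dlt4_inl, dlt4_inrl, dlt4_inrr]
      have h : ∀ j : Fin g,
          ((if (j:ℕ)+1 ∈ Finset.Icc 1 g then (1:ZMod 2) else 0) + 0 + 0 + 0) *
            (0 + (if (j:ℕ)+1 = 1 then (1:ZMod 2) else 0) + (if (j:ℕ)+1 = g then 1 else 0) + 0)
          = (if (j:ℕ)+1 = 1 then (1:ZMod 2) else 0) + (if (j:ℕ)+1 = g then 1 else 0) := by
        intro j
        have hj := j.isLt
        rw [if_pos (Finset.mem_Icc.mpr (by omega))]
        ring
      rw [Finset.sum_congr rfl fun j _ => h j, Finset.sum_add_distrib,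
        sum_indicator g 1 le_rfl (by omega), sum_indicator g g (by omega) le_rfl]
      decide
    · rcases eq_or_ne k g with hkg | hkneg
      · rw [hkg]
        have hB : BIIA g g = bet g (g / 2) + bet g (g / 2 + 1) + dlt g 4 := by
          unfold BIIA; rw [if_neg (by omega), if_neg (by omega), if_pos rfl]
        rw [hB]
        unfold qform
        simp only [Pi.add_apply, bet_inl, bet_inrl, bet_inrr, dlt4_inl, dlt4_inrl, dlt4_inrr]
        simp
        decide
      · rcases Nat.even_or_odd k with hke | hko
        · -- even case, 2 ≤ k < g
          obtain ⟨i, hi⟩ := hke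
          have hB : BIIA g k = (∑ m ∈ Finset.Icc (k / 2 + 1) (g - k / 2), alph g m)
              + bet g (k / 2) + bet g (g + 1 - k / 2) + dlt g 4 := by
            unfold BIIA
            rw [if_neg (by omega), if_neg hkne1, if_neg hkneg, if_pos (by omega)]
          rw [hB]
          unfold qform
          simp only [Pi.add_apply, sum_alph_inl, sum_alph_inrl, sum_alph_inrr, bet_inl,
            bet_inrl, bet_inrr, dlt4_inl, dlt4_inrl, dlt4_inrr]
          have h : ∀ j : Fin g,
              ((if (j:ℕ)+1 ∈ Finset.Icc (k/2+1) (g - k/2) then (1:ZMod 2) else 0) + 0 + 0 + 0) *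
                (0 + (if (j:ℕ)+1 = k/2 then (1:ZMod 2) else 0)
                  + (if (j:ℕ)+1 = g + 1 - k/2 then 1 else 0) + 0)
              = 0 := by
            intro j
            have hj := j.isLt
            simp only [Finset.mem_Icc]
            split_ifs <;> first | ring1 | (exfalso; omega)
          rw [Finset.sum_congr rfl fun j _ => h j]
          simp
          decide
        · -- odd case, 3 ≤ k < g
          obtain ⟨i, hi⟩ := hko
          have hi1 : 1 ≤ i := by omega
          have hB : BIIA g k = (∑ m ∈ Finset.Icc ((k-1)/2 + 1) (g - (k-1)/2), alph g m)
              + bet g ((k-1)/2 + 1) + bet g (g - (k-1)/2) + dlt g 4 := by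
            unfold BIIA
            rw [if_neg (by omega), if_neg hkne1, if_neg hkneg, if_neg (by omega)]
          rw [hB]
          unfold qform
          simp only [Pi.add_apply, sum_alph_inl, sum_alph_inrl, sum_alph_inrr, bet_inl,
            bet_inrl, bet_inrr, dlt4_inl, dlt4_inrl, dlt4_inrr]
          have h : ∀ j : Fin g,
              ((if (j:ℕ)+1 ∈ Finset.Icc ((k-1)/2+1) (g - (k-1)/2) then (1:ZMod 2) else 0) + 0 + 0 + 0) *
                (0 + (if (j:ℕ)+1 = (k-1)/2+1 then (1:ZMod 2) else 0)
                  + (if (j:ℕ)+1 = g - (k-1)/2 then 1 else 0) + 0)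
              = (if (j:ℕ)+1 = (k-1)/2+1 then (1:ZMod 2) else 0)
                  + (if (j:ℕ)+1 = g - (k-1)/2 then 1 else 0) := by
            intro j
            have hj := j.isLt
            simp only [Finset.mem_Icc]
            split_ifs <;> first | ring1 | (exfalso; omega)
          rw [Finset.sum_congr rfl fun j _ => h j, Finset.sum_add_distrib,
            sum_indicator g ((k-1)/2+1) (by omega) (by omega),
            sum_indicator g (g - (k-1)/2) (by omega) (by omega)]
          decide

lemma Bform_dlt34 (g : ℕ) (x : MCKVec g) : Bform g x (dlt g 3 + dlt g 4) = 0 := by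
  unfold Bform
  simp [dlt]

lemma qform_dlt34 (g : ℕ) : qform g (dlt g 3 + dlt g 4) = 0 := by
  simp [qform, dlt]
  decide

/-- There is a quadratic form `q` with respect to the mod-2 intersection pairing
taking the value `1` on all vanishing cycles `B_{k,1}`, `B_{k,2} = B_{k,1}+δ_3+δ_4`,
`C_1 = δ_2`, `C_2 = δ_1` of the type IIA MCK pencil of even genus, and with
`q(δ_j) = 1` for all `j ∈ {1,2,3,4}`. -/
theorem typeIIA_even_genus_spin (g : ℕ) (hg : 2 ≤ g) (hgeven : Even g) :
    ∃ q : MCKVec g → ZMod 2,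
      (∀ x y : MCKVec g, q (x + y) = q x + q y + Bform g x y) ∧
      (∀ k ≤ g, q (BIIA g k) = 1) ∧
      (∀ k ≤ g, q (BIIA g k + dlt g 3 + dlt g 4) = 1) ∧
      q (dlt g 2) = 1 ∧ q (dlt g 1) = 1 ∧
      (∀ j, 1 ≤ j → j ≤ 4 → q (dlt g j) = 1) := by
  refine ⟨qform g, qform_add g, fun k hk => qform_BIIA g k hg hgeven hk, ?_, ?_, ?_, ?_⟩
  · intro k hk
    rw [add_assoc, qform_add, qform_BIIA g k hg hgeven hk, qform_dlt34, Bform_dlt34]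
    decide
  · exact qform_dlt g 2 (by omega) (by omega)
  · exact qform_dlt g 1 (by omega) (by omega)
  · exact fun j h1 h4 => qform_dlt g j h1 h4
end
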